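/- Let K be a field of characteristic 2 and let E be an elliptic curve over K. Then E(K) contains a point of order 8 if and only if there exists t ∈ K with t ∉ {0, 1} such that E is K-isomorphic to the elliptic curve E_{8,t} : y² + xy = x³ + (t/(t² + 1))⁸. -/

import Mathlib

/-!
Put `E` in one of the characteristic-two normal forms. In `y² + a₃y = x³ + a₄x + a₆` a point
`(x, y)` is 2-torsion iff `a₃ = 0`, so either there is no 2-torsion or every point is 2-torsion;
either way there is no point of order 8. In `y² + xy = x³ + a₂x² + a₆` the 2-torsion point has
`x = 0`, and doubling a point with `x ≠ 0` gives `x(2P) = ℓ² + ℓ + a₂` with `x(2P) x² = x⁴ + a₆`.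
If `P` has order 8 and `Q = 2P`, then `x(2Q) = 0` gives `a₂ ∈ {σ² + σ}`, so the shear
`y ↦ y + σx` removes `a₂`, and `a₆ = x(Q)⁴`; then `x(Q) x(P)² = x(P)⁴ + x(Q)⁴` forces
`x(Q) = (ρ² + ρ)²` for some `ρ ∈ K`. Conversely `(ρ⁴ + ρ³, ρ⁸ + ρ⁵)` has order 8 on
`y² + xy = x³ + (ρ² + ρ)⁸`. Finally `ρ = t / (t + 1)` turns `ρ² + ρ` into `t / (t² + 1)`.
-/

open WeierstrassCurve

lemma addOrderOf_eq_prime_pow_succ_iff {G : Type*} [AddMonoid G] {x : G} {p n : ℕ}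
    [hp : Fact p.Prime] : addOrderOf x = p ^ (n + 1) ↔ p ^ n • x ≠ 0 ∧ p ^ (n + 1) • x = 0 := by
  refine ⟨fun h ↦ ⟨fun hn ↦ ?_, h ▸ addOrderOf_nsmul_eq_zero x⟩,
    fun h ↦ addOrderOf_eq_prime_pow h.1 h.2⟩
  have := h ▸ addOrderOf_dvd_of_nsmul_eq_zero hn
  rw [Nat.pow_dvd_pow_iff_le_right hp.out.one_lt] at this
  omega

lemma addOrderOf_eq_eight_iff {G : Type*} [AddMonoid G] {x : G} :
    addOrderOf x = 8 ↔ 2 • 2 • x ≠ 0 ∧ 2 • 2 • 2 • x = 0 := by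
  simp only [← mul_nsmul']
  exact addOrderOf_eq_prime_pow_succ_iff (p := 2) (n := 2)

namespace WeierstrassCurve

variable {F : Type*} [Field F]

namespace VariableChange

variable (C : VariableChange F)

/-- `C • W` is `W` in the new coordinates; `mapX` and `mapY` send new coordinates back to old
ones, carrying points of `C • W` to points of `W`. -/
def mapX (x : F) : F := C.u ^ 2 * x + C.r

def mapY (x y : F) : F := C.u ^ 3 * y + C.u ^ 2 * C.s * x + C.t

lemma mapX_injective : Function.Injective C.mapX := fun _ _ h ↦
  mul_left_cancel₀ (pow_ne_zero 2 C.u.ne_zero) (add_right_cancel h)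

lemma mapY_injective (x : F) : Function.Injective (C.mapY x) := fun _ _ h ↦
  mul_left_cancel₀ (pow_ne_zero 3 C.u.ne_zero) (add_right_cancel (add_right_cancel h))

end VariableChange

namespace Affine

open VariableChange

variable (W : WeierstrassCurve F) (C : VariableChange F)

lemma equation_variableChange_iff (x y : F) :
    (C • W).toAffine.Equation x y ↔ W.toAffine.Equation (C.mapX x) (C.mapY x y) := by
  have hu := C.u.ne_zero
  have key : C.mapY x y ^ 2 + W.a₁ * C.mapX x * C.mapY x y + W.a₃ * C.mapY x y -
      (C.mapX x ^ 3 + W.a₂ * C.mapX x ^ 2 + W.a₄ * C.mapX x + W.a₆) =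
      C.u ^ 6 * (y ^ 2 + (C • W).a₁ * x * y + (C • W).a₃ * y -
        (x ^ 3 + (C • W).a₂ * x ^ 2 + (C • W).a₄ * x + (C • W).a₆)) := by
    simp only [variableChange_a₁, variableChange_a₂, variableChange_a₃, variableChange_a₄,
      variableChange_a₆, mapX, mapY, Units.val_inv_eq_inv_val]
    field_simp
    ring
  rw [equation_iff', equation_iff', key, mul_eq_zero, or_iff_right (pow_ne_zero 6 hu)]

lemma nonsingular_variableChange_iff (x y : F) :
    (C • W).toAffine.Nonsingular x y ↔ W.toAffine.Nonsingular (C.mapX x) (C.mapY x y) := by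
  have hu := C.u.ne_zero
  have hY : 2 * C.mapY x y + W.a₁ * C.mapX x + W.a₃ =
      C.u ^ 3 * (2 * y + (C • W).a₁ * x + (C • W).a₃) := by
    simp only [variableChange_a₁, variableChange_a₃, mapX, mapY, Units.val_inv_eq_inv_val]
    field_simp
    ring
  have hX : W.a₁ * C.mapY x y - (3 * C.mapX x ^ 2 + 2 * W.a₂ * C.mapX x + W.a₄) =
      C.u ^ 4 * ((C • W).a₁ * y - (3 * x ^ 2 + 2 * (C • W).a₂ * x + (C • W).a₄)) -
        C.s * (C.u ^ 3 * (2 * y + (C • W).a₁ * x + (C • W).a₃)) := by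
    simp only [variableChange_a₁, variableChange_a₂, variableChange_a₃, variableChange_a₄,
      mapX, mapY, Units.val_inv_eq_inv_val]
    field_simp
    ring
  rw [nonsingular_iff', nonsingular_iff', ← equation_variableChange_iff, hX, hY]
  refine and_congr_right fun _ ↦ ?_
  simp only [ne_eq, ← not_and_or, not_iff_not]
  constructor <;> rintro ⟨h₁, h₂⟩ <;> simp_all

lemma negY_variableChange (x y : F) :
    W.toAffine.negY (C.mapX x) (C.mapY x y) = C.mapY x ((C • W).toAffine.negY x y) := by
  have hu := C.u.ne_zero
  simp only [negY, variableChange_a₁, variableChange_a₃, mapX, mapY, Units.val_inv_eq_inv_val]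
  field_simp
  ring

variable {W C}

lemma addX_variableChange (x₁ x₂ ℓ : F) :
    W.toAffine.addX (C.mapX x₁) (C.mapX x₂) (C.u * ℓ + C.s) =
      C.mapX ((C • W).toAffine.addX x₁ x₂ ℓ) := by
  have hu := C.u.ne_zero
  simp only [addX, variableChange_a₁, variableChange_a₂, mapX, Units.val_inv_eq_inv_val]
  field_simp
  ring

lemma negAddY_variableChange (x₁ x₂ y₁ ℓ : F) :
    W.toAffine.negAddY (C.mapX x₁) (C.mapX x₂) (C.mapY x₁ y₁) (C.u * ℓ + C.s) =
      C.mapY ((C • W).toAffine.addX x₁ x₂ ℓ) ((C • W).toAffine.negAddY x₁ x₂ y₁ ℓ) := by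
  rw [negAddY, negAddY, addX_variableChange]
  simp only [mapX, mapY]
  ring

lemma addY_variableChange (x₁ x₂ y₁ ℓ : F) :
    W.toAffine.addY (C.mapX x₁) (C.mapX x₂) (C.mapY x₁ y₁) (C.u * ℓ + C.s) =
      C.mapY ((C • W).toAffine.addX x₁ x₂ ℓ) ((C • W).toAffine.addY x₁ x₂ y₁ ℓ) := by
  rw [addY, negAddY_variableChange, addX_variableChange, negY_variableChange, addY]

lemma variableChange_eq_negY_iff {x₁ x₂ y₁ y₂ : F} :
    (C.mapX x₁ = C.mapX x₂ ∧ C.mapY x₁ y₁ = W.toAffine.negY (C.mapX x₂) (C.mapY x₂ y₂)) ↔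
      (x₁ = x₂ ∧ y₁ = (C • W).toAffine.negY x₂ y₂) := by
  rw [C.mapX_injective.eq_iff]
  refine and_congr_right fun hx ↦ ?_
  rw [hx, negY_variableChange, (C.mapY_injective x₂).eq_iff]

variable [DecidableEq F]

lemma slope_variableChange {x₁ x₂ y₁ y₂ : F} (h₁ : (C • W).toAffine.Equation x₁ y₁)
    (h₂ : (C • W).toAffine.Equation x₂ y₂)
    (hxy : ¬(x₁ = x₂ ∧ y₁ = (C • W).toAffine.negY x₂ y₂)) :
    W.toAffine.slope (C.mapX x₁) (C.mapX x₂) (C.mapY x₁ y₁) (C.mapY x₂ y₂) =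
      C.u * (C • W).toAffine.slope x₁ x₂ y₁ y₂ + C.s := by
  have hu := C.u.ne_zero
  by_cases hx : x₁ = x₂
  · subst hx
    have hy : y₁ ≠ (C • W).toAffine.negY x₁ y₂ := fun hy ↦ hxy ⟨rfl, hy⟩
    obtain rfl : y₁ = y₂ := Y_eq_of_Y_ne h₁ h₂ rfl hy
    have hy' : C.mapY x₁ y₁ ≠ W.toAffine.negY (C.mapX x₁) (C.mapY x₁ y₁) := by
      rw [negY_variableChange, (C.mapY_injective x₁).ne_iff]
      exact hy
    rw [slope_of_Y_ne rfl hy', slope_of_Y_ne rfl hy, mul_div_assoc',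
      div_add' _ _ _ (sub_ne_zero.mpr hy), div_eq_div_iff (sub_ne_zero.mpr hy')
      (sub_ne_zero.mpr hy)]
    simp only [negY, variableChange_a₁, variableChange_a₂, variableChange_a₃,
      variableChange_a₄, mapX, mapY, Units.val_inv_eq_inv_val]
    field_simp
    ring
  · have hx' : C.mapX x₁ ≠ C.mapX x₂ := C.mapX_injective.ne hx
    rw [slope_of_X_ne hx', slope_of_X_ne hx, mul_div_assoc', div_add' _ _ _ (sub_ne_zero.mpr hx),
      div_eq_div_iff (sub_ne_zero.mpr hx') (sub_ne_zero.mpr hx)]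
    simp only [mapX, mapY]
    ring

namespace Point

variable (W C)

def variableChangeHom : (C • W).toAffine.Point →+ W.toAffine.Point where
  toFun
    | 0 => 0
    | some x y h => some (C.mapX x) (C.mapY x y) ((nonsingular_variableChange_iff W C x y).mp h)
  map_zero' := rfl
  map_add' := by
    rintro (_ | @⟨x₁, y₁, h₁⟩) (_ | @⟨x₂, y₂, h₂⟩)
    any_goals rfl
    by_cases hxy : x₁ = x₂ ∧ y₁ = (C • W).toAffine.negY x₂ y₂
    · rw [add_of_Y_eq hxy.1 hxy.2, add_of_Y_eq (variableChange_eq_negY_iff.mpr hxy).1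
        (variableChange_eq_negY_iff.mpr hxy).2]
    · rw [add_some hxy, add_some (variableChange_eq_negY_iff.not.mpr hxy), some.injEq,
        slope_variableChange h₁.1 h₂.1 hxy, addX_variableChange, addY_variableChange]
      exact ⟨rfl, rfl⟩

lemma variableChangeHom_injective : Function.Injective (variableChangeHom W C) := by
  rintro (_ | @⟨x₁, y₁, _⟩) (_ | @⟨x₂, y₂, _⟩) h
  · rfl
  · exact absurd h.symm (some_ne_zero _)
  · exact absurd h (some_ne_zero _)
  · obtain ⟨hx, hy⟩ := some.inj h
    obtain rfl := C.mapX_injective hx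
    obtain rfl := C.mapY_injective x₁ hy
    rfl

end Point

lemma exists_addOrderOf_variableChange_iff (n : ℕ) :
    (∃ P : (C • W).toAffine.Point, addOrderOf P = n) ↔
      ∃ P : W.toAffine.Point, addOrderOf P = n := by
  have of_smul (W' : WeierstrassCurve F) (C' : VariableChange F) :
      (∃ P : (C' • W').toAffine.Point, addOrderOf P = n) →
        ∃ P : W'.toAffine.Point, addOrderOf P = n := fun ⟨P, hP⟩ ↦
    ⟨Point.variableChangeHom W' C' P,
      (addOrderOf_injective _ (Point.variableChangeHom_injective W' C') P).trans hP⟩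
  refine ⟨of_smul W C, fun h ↦ of_smul (C • W) C⁻¹ ?_⟩
  rwa [inv_smul_smul]

end Affine
end WeierstrassCurve

section CharTwo

variable {K : Type*} [Field K] [CharP K 2]

/-- `s := x + q² / x` is a square root of `q`, and `ρ := s + x / s` solves `ρ² + ρ = s`. -/
lemma exists_sq_add_self_sq_eq {x q : K} (hx : x ≠ 0) (hq : q ≠ 0)
    (h : q * x ^ 2 = x ^ 4 + q ^ 4) : ∃ ρ : K, (ρ ^ 2 + ρ) ^ 2 = q := by
  set s := x + q ^ 2 / x
  have hsx : s * x = x ^ 2 + q ^ 2 := by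
    simp only [s]
    field_simp
  have hs : s ^ 2 = q := by
    refine mul_right_cancel₀ (pow_ne_zero 2 hx) ?_
    linear_combination (norm := ring_nf) (s * x + x ^ 2 + q ^ 2) * hsx - h
    reduce_mod_char!
  have hs0 : s ≠ 0 := by
    rintro h0
    exact hq (by rw [← hs, h0, zero_pow two_ne_zero])
  refine ⟨s + x / s, ?_⟩
  have hρ : (s + x / s) ^ 2 + (s + x / s) = s := by
    field_simp
    linear_combination (norm := ring_nf) hsx + (q + s ^ 2) * hs
    reduce_mod_char!
  rw [hρ, hs]

lemma sq_add_one_of_char_two (t : K) : t ^ 2 + 1 = (t + 1) ^ 2 := by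
  rw [CharTwo.add_sq, one_pow]

lemma sq_add_self_div_add_one {t : K} (ht : t ≠ 1) :
    (t / (t + 1)) ^ 2 + t / (t + 1) = t / (t ^ 2 + 1) := by
  have ht' : t + 1 ≠ 0 := by rwa [ne_eq, CharTwo.add_eq_zero]
  rw [sq_add_one_of_char_two]
  field_simp
  ring_nf
  reduce_mod_char!

lemma exists_div_sq_add_one_eq {ρ : K} (hρ : ρ ^ 2 + ρ ≠ 0) :
    ∃ t : K, t ≠ 0 ∧ t ≠ 1 ∧ t / (t ^ 2 + 1) = ρ ^ 2 + ρ := by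
  have hρ0 : ρ ≠ 0 := by rintro rfl; simp at hρ
  have hρ1 : ρ + 1 ≠ 0 := fun h ↦ hρ (by linear_combination ρ * h)
  have ht1 : ρ / (ρ + 1) + 1 = 1 / (ρ + 1) := by
    field_simp
    ring_nf
    reduce_mod_char!
  have ht : ρ / (ρ + 1) ≠ 1 := by
    rw [ne_eq, ← CharTwo.add_eq_zero, ht1]
    exact one_div_ne_zero hρ1
  refine ⟨ρ / (ρ + 1), div_ne_zero hρ0 hρ1, ht, ?_⟩
  rw [← sq_add_self_div_add_one ht, ht1, div_div_div_cancel_right₀ hρ1, div_one]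

end CharTwo

namespace WeierstrassCurve.Affine

variable {K : Type*} [Field K] [CharP K 2] (W : WeierstrassCurve K)

lemma negY_of_char_two (x y : K) : W.toAffine.negY x y = y + W.a₁ * x + W.a₃ := by
  simp only [negY, CharTwo.sub_eq_add, CharTwo.neg_eq]

lemma eq_negY_iff_of_char_two (x y : K) :
    y = W.toAffine.negY x y ↔ W.a₁ * x + W.a₃ = 0 := by
  rw [negY_of_char_two, add_assoc, left_eq_add]

lemma nonsingular_of_char_two {x y : K} (h : W.toAffine.Equation x y)
    (hxy : W.a₁ * x + W.a₃ ≠ 0) : W.toAffine.Nonsingular x y := by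
  refine (W.toAffine.nonsingular_iff' x y).mpr ⟨h, .inr ?_⟩
  rwa [CharTwo.two_eq_zero, zero_mul, zero_add]

lemma Point.two_nsmul_some_eq_zero_iff [DecidableEq K] {x y : K}
    (h : W.toAffine.Nonsingular x y) : 2 • some x y h = 0 ↔ W.a₁ * x + W.a₃ = 0 := by
  rw [two_nsmul, ← eq_negY_iff_of_char_two]
  by_cases hy : y = W.toAffine.negY x y
  · rw [add_self_of_Y_eq hy]
    exact iff_of_true rfl hy
  · rw [add_self_of_Y_ne hy]
    exact iff_of_false (some_ne_zero _) hy

section IsCharTwoJNeZeroNF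

variable [W.IsCharTwoJNeZeroNF]

lemma addX_self_of_isCharTwoJNeZeroNF (x ℓ : K) :
    W.toAffine.addX x x ℓ = ℓ ^ 2 + ℓ + W.a₂ := by
  rw [addX, a₁_of_isCharTwoJNeZeroNF]
  ring_nf
  reduce_mod_char!

lemma ne_negY_of_isCharTwoJNeZeroNF {x : K} (y : K) (hx : x ≠ 0) :
    y ≠ W.toAffine.negY x y := by
  rwa [ne_eq, eq_negY_iff_of_char_two, a₁_of_isCharTwoJNeZeroNF, a₃_of_isCharTwoJNeZeroNF,
    one_mul, add_zero]

lemma variableChange_of_isCharTwoJNeZeroNF {σ : K} (ha₂ : W.a₂ = σ ^ 2 + σ) :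
    (⟨1, 0, σ, 0⟩ : VariableChange K) • W = ⟨1, 0, 0, 0, W.a₆⟩ := by
  ext <;> simp [variableChange_a₁, variableChange_a₂, variableChange_a₃, variableChange_a₄,
    variableChange_a₆, ha₂, CharTwo.two_eq_zero]

variable [DecidableEq K]

lemma slope_mul_of_isCharTwoJNeZeroNF {x : K} (y : K) (hx : x ≠ 0) :
    W.toAffine.slope x x y y * x = x ^ 2 + y := by
  rw [slope_of_Y_ne rfl (ne_negY_of_isCharTwoJNeZeroNF W y hx), div_mul_eq_mul_div,
    div_eq_iff (sub_ne_zero.mpr (ne_negY_of_isCharTwoJNeZeroNF W y hx)), negY_of_char_two,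
    a₁_of_isCharTwoJNeZeroNF, a₃_of_isCharTwoJNeZeroNF, a₄_of_isCharTwoJNeZeroNF]
  ring_nf
  reduce_mod_char!

lemma addX_slope_mul_sq_of_isCharTwoJNeZeroNF {x y : K} (h : W.toAffine.Equation x y)
    (hx : x ≠ 0) : W.toAffine.addX x x (W.toAffine.slope x x y y) * x ^ 2 = x ^ 4 + W.a₆ := by
  rw [equation_iff, a₁_of_isCharTwoJNeZeroNF, a₃_of_isCharTwoJNeZeroNF,
    a₄_of_isCharTwoJNeZeroNF] at h
  rw [addX_self_of_isCharTwoJNeZeroNF]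
  linear_combination (norm := ring_nf)
    (W.toAffine.slope x x y y * x + x ^ 2 + y + x) * slope_mul_of_isCharTwoJNeZeroNF W y hx + h
  reduce_mod_char!

lemma Point.exists_two_nsmul_some_of_isCharTwoJNeZeroNF {x y : K}
    (h : W.toAffine.Nonsingular x y) (hx : x ≠ 0) :
    ∃ x' y' h', 2 • some x y h = some x' y' h' ∧ x' * x ^ 2 = x ^ 4 + W.a₆ ∧
      ∃ ℓ, x' = ℓ ^ 2 + ℓ + W.a₂ :=
  ⟨_, _, _, (two_nsmul _).trans (add_self_of_Y_ne (ne_negY_of_isCharTwoJNeZeroNF W y hx)),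
    addX_slope_mul_sq_of_isCharTwoJNeZeroNF W h.1 hx, _, addX_self_of_isCharTwoJNeZeroNF W _ _⟩

theorem exists_a₂_a₆_of_addOrderOf_eq_eight {P : W.toAffine.Point} (hP : addOrderOf P = 8) :
    ∃ σ ρ : K, W.a₂ = σ ^ 2 + σ ∧ ρ ^ 2 + ρ ≠ 0 ∧ W.a₆ = (ρ ^ 2 + ρ) ^ 8 := by
  obtain ⟨h4, h8⟩ := addOrderOf_eq_eight_iff.mp hP
  rcases P with _ | @⟨x, y, h⟩
  · exact absurd (by rw [← Point.zero_def, smul_zero, smul_zero]) h4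
  have hx : x ≠ 0 := fun hx ↦ h4 (by
    rw [(Point.two_nsmul_some_eq_zero_iff W h).mpr (by simp [hx]), smul_zero])
  obtain ⟨x₂, y₂, h₂, hQ, hxx₂, -⟩ := Point.exists_two_nsmul_some_of_isCharTwoJNeZeroNF W h hx
  rw [hQ] at h4 h8
  have hx₂ : x₂ ≠ 0 := fun hx₂ ↦ h4 ((Point.two_nsmul_some_eq_zero_iff W h₂).mpr (by simp [hx₂]))
  obtain ⟨x₄, y₄, h₄, hT, hx₂x₄, σ, hσ⟩ :=
    Point.exists_two_nsmul_some_of_isCharTwoJNeZeroNF W h₂ hx₂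
  rw [hT, Point.two_nsmul_some_eq_zero_iff] at h8
  have hx₄ : x₄ = 0 := by simpa using h8
  have ha₆ : W.a₆ = x₂ ^ 4 := by
    rw [hx₄, zero_mul, eq_comm, CharTwo.add_eq_zero] at hx₂x₄
    exact hx₂x₄.symm
  obtain ⟨ρ, hρ⟩ := exists_sq_add_self_sq_eq hx hx₂ (ha₆ ▸ hxx₂)
  refine ⟨σ, ρ, ?_, fun h0 ↦ hx₂ (by rw [← hρ, h0, zero_pow two_ne_zero]), ?_⟩
  · rw [hx₄, eq_comm, CharTwo.add_eq_zero] at hσ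
    exact hσ.symm
  · rw [ha₆, ← hρ]
    ring

theorem exists_addOrderOf_eq_eight_of_a₆_eq (ha₂ : W.a₂ = 0) {ρ : K} (ha₆ : W.a₆ = (ρ ^ 2 + ρ) ^ 8)
    (hρ : ρ ^ 2 + ρ ≠ 0) : ∃ P : W.toAffine.Point, addOrderOf P = 8 := by
  have hρ0 : ρ ≠ 0 := by rintro rfl; simp at hρ
  have hx : (ρ ^ 2 + ρ) * ρ ^ 2 ≠ 0 := mul_ne_zero hρ (pow_ne_zero 2 hρ0)
  -- `P` doubles to a point with `x = (ρ² + ρ)²`, which doubles to the 2-torsion point `x = 0`.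
  have h : W.toAffine.Nonsingular ((ρ ^ 2 + ρ) * ρ ^ 2) (ρ ^ 8 + ρ ^ 5) := by
    refine nonsingular_of_char_two W ?_ (by simpa using hx)
    rw [equation_iff, a₁_of_isCharTwoJNeZeroNF, a₃_of_isCharTwoJNeZeroNF,
      a₄_of_isCharTwoJNeZeroNF, ha₂, ha₆]
    ring_nf
    reduce_mod_char!
  obtain ⟨x₂, y₂, h₂, hQ, hxx₂, -⟩ := Point.exists_two_nsmul_some_of_isCharTwoJNeZeroNF W h hx
  have hx₂ : x₂ = (ρ ^ 2 + ρ) ^ 2 := by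
    refine mul_right_cancel₀ (pow_ne_zero 2 hx) (hxx₂.trans ?_)
    rw [ha₆]
    ring_nf
    reduce_mod_char!
  have hx₂0 : x₂ ≠ 0 := hx₂ ▸ pow_ne_zero 2 hρ
  obtain ⟨x₄, y₄, h₄, hT, hx₂x₄, -⟩ := Point.exists_two_nsmul_some_of_isCharTwoJNeZeroNF W h₂ hx₂0
  have hx₄ : x₄ = 0 := by
    refine mul_right_cancel₀ (pow_ne_zero 2 hx₂0) ?_
    rw [hx₂x₄, hx₂, ha₆, zero_mul, ← pow_mul, CharTwo.add_self_eq_zero]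
  refine ⟨.some _ _ h, addOrderOf_eq_eight_iff.mpr ⟨?_, ?_⟩⟩
  · rw [hQ, hT]
    exact Point.some_ne_zero _
  · rw [hQ, hT, Point.two_nsmul_some_eq_zero_iff, hx₄]
    simp

end IsCharTwoJNeZeroNF

theorem addOrderOf_ne_eight_of_isCharTwoJEqZeroNF [DecidableEq K] [W.IsCharTwoJEqZeroNF]
    (P : W.toAffine.Point) : addOrderOf P ≠ 8 := by
  intro hP
  obtain ⟨h4, h8⟩ := addOrderOf_eq_eight_iff.mp hP
  rcases hT : 2 • 2 • P with _ | @⟨x, y, h⟩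
  · exact h4 hT
  rw [hT, Point.two_nsmul_some_eq_zero_iff, a₁_of_isCharTwoJEqZeroNF, zero_mul, zero_add] at h8
  rcases P with _ | @⟨x', y', h'⟩
  · exact absurd (by rw [← Point.zero_def, smul_zero, smul_zero]) h4
  · rw [(Point.two_nsmul_some_eq_zero_iff W h').mpr (by simp [h8]), smul_zero] at h4
    exact h4 rfl

theorem exists_addOrderOf_eq_eight_iff_of_char_two [DecidableEq K] :
    (∃ P : W.toAffine.Point, addOrderOf P = 8) ↔
      ∃ ρ : K, ρ ^ 2 + ρ ≠ 0 ∧ ∃ C : VariableChange K, C • W = ⟨1, 0, 0, 0, (ρ ^ 2 + ρ) ^ 8⟩ := by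
  constructor
  · intro hW
    obtain ⟨C, hC⟩ := W.exists_variableChange_isCharTwoNF
    obtain ⟨P, hP⟩ := (exists_addOrderOf_variableChange_iff (C := C) 8).mpr hW
    cases hC
    · obtain ⟨σ, ρ, hσ, hρ, ha₆⟩ := exists_a₂_a₆_of_addOrderOf_eq_eight _ hP
      refine ⟨ρ, hρ, ⟨1, 0, σ, 0⟩ * C, ?_⟩
      rw [mul_smul, variableChange_of_isCharTwoJNeZeroNF _ hσ, ha₆]
    · exact absurd hP (addOrderOf_ne_eight_of_isCharTwoJEqZeroNF _ P)
  · rintro ⟨ρ, hρ, C, hC⟩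
    rw [← exists_addOrderOf_variableChange_iff (C := C), hC]
    have : IsCharTwoJNeZeroNF ⟨1, 0, 0, 0, (ρ ^ 2 + ρ) ^ 8⟩ := ⟨rfl, rfl, rfl⟩
    exact exists_addOrderOf_eq_eight_of_a₆_eq _ rfl rfl hρ

end WeierstrassCurve.Affine

open scoped Classical in
theorem order_eight_char_two_general {K : Type*} [Field K] [CharP K 2]
    (E : WeierstrassCurve K) :
    (∃ P : E.toAffine.Point, addOrderOf P = 8) ↔
    ∃ t : K, t ≠ 0 ∧ t ≠ 1 ∧ ∃ C : VariableChange K,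
      C • E = ⟨1, 0, 0, 0, (t / (t ^ 2 + 1)) ^ 8⟩ := by
  rw [Affine.exists_addOrderOf_eq_eight_iff_of_char_two]
  constructor
  · rintro ⟨ρ, hρ, C, hC⟩
    obtain ⟨t, ht0, ht1, ht⟩ := exists_div_sq_add_one_eq hρ
    exact ⟨t, ht0, ht1, C, ht ▸ hC⟩
  · rintro ⟨t, ht0, ht1, C, hC⟩
    refine ⟨t / (t + 1), ?_, C, ?_⟩ <;> rw [sq_add_self_div_add_one ht1]
    · rw [sq_add_one_of_char_two]
      exact div_ne_zero ht0 (pow_ne_zero 2 (by rwa [ne_eq, CharTwo.add_eq_zero]))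
    · exact hC

open scoped Classical in
/-- over a field of characteristic 2, an elliptic curve has a `K`-rational
point of order 8 if and only if it is `K`-isomorphic to
`E_{8,t} : y² + xy = x³ + (t/(t² + 1))⁸` for some `t ∈ K \ {0, 1}`. -/
theorem order_eight_char_two {K : Type*} [Field K] [CharP K 2]
    (E : WeierstrassCurve K) [E.IsElliptic] :
    (∃ P : E.toAffine.Point, addOrderOf P = 8) ↔
    ∃ t : K, t ≠ 0 ∧ t ≠ 1 ∧ ∃ C : VariableChange K,
      C • E = ⟨1, 0, 0, 0, (t / (t ^ 2 + 1)) ^ 8⟩ :=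
  order_eight_char_two_general E
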